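/- The graph G admits a planar storyplan. -/

import Mathlib

/-- The topological drawing of the subgraph of `G` induced by the visible vertex
set `S`, with vertex placement `D` and edge curves `γ`, is planar. -/
def IsPlanarTopoFrame {V : Type*} (G : SimpleGraph V) (S : Set V)
    (D : V → ℝ × ℝ) (γ : ∀ u v, G.Adj u v → Path (D u) (D v)) : Prop :=
  Set.InjOn D S ∧
  (∀ u v (h : G.Adj u v) w, u ∈ S → v ∈ S → w ∈ S →
      D w ∈ Set.range ⇑(γ u v h) → w = u ∨ w = v) ∧
  (∀ u v x y (h₁ : G.Adj u v) (h₂ : G.Adj x y), u ∈ S → v ∈ S → x ∈ S → y ∈ S →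
      ¬((u = x ∧ v = y) ∨ (u = y ∧ v = x)) →
      ∀ p ∈ Set.range ⇑(γ u v h₁) ∩ Set.range ⇑(γ x y h₂),
        ∃ z, (z = u ∨ z = v) ∧ (z = x ∨ z = y) ∧ p = D z)

/-- `G` admits a planar (topological) storyplan: there are `len ≥ 1` time steps,
each vertex `v` is visible on a nonempty interval `[s v, e v] ⊆ [1, len]`,
every vertex gets a point `D v ∈ ℝ²` and every edge `uv` gets a simple
(injective) curve from `D u` to `D v` (one curve per edge, independent of
orientation), the endpoints of every edge co-occur, and every frame is a
planar topological drawing. -/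
def HasPlanarStoryplan {V : Type*} (G : SimpleGraph V) : Prop :=
  ∃ (len : ℕ) (s e : V → ℕ) (D : V → ℝ × ℝ)
      (γ : ∀ u v, G.Adj u v → Path (D u) (D v)),
    1 ≤ len ∧
    (∀ v, 1 ≤ s v ∧ s v ≤ e v ∧ e v ≤ len) ∧
    (∀ u v (h : G.Adj u v), γ v u h.symm = (γ u v h).symm) ∧
    (∀ u v (h : G.Adj u v), Function.Injective ⇑(γ u v h)) ∧
    (∀ u v, G.Adj u v → ∃ t, s u ≤ t ∧ t ≤ e u ∧ s v ≤ t ∧ t ≤ e v) ∧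
    (∀ t, 1 ≤ t → t ≤ len → IsPlanarTopoFrame G {v | s v ≤ t ∧ t ≤ e v} D γ)

/-- The 28 vertices of the graph `G`: cycle vertices `a i`, `b i`, `c i`
(`i ∈ Fin 4`), apex vertices `q i j` and edge vertices `r i j`
(`i ∈ Fin 4`, `j ∈ Fin 2`). -/
inductive GVert : Type
  | a : Fin 4 → GVert
  | b : Fin 4 → GVert
  | c : Fin 4 → GVert
  | q : Fin 4 → Fin 2 → GVert
  | r : Fin 4 → Fin 2 → GVert
  deriving DecidableEq

/-- Base relation generating the edges of `G`: the three 4-cycles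
`A`, `B`, `C`; each apex vertex `q i j` adjacent to all twelve cycle vertices;
each edge vertex `r i j` adjacent to `q i j` and to the six cycle vertices
`a i, a (i+1), b i, b (i+1), c i, c (i+1)`. -/
def GRel : GVert → GVert → Prop
  | .a i, .a k => k = i + 1
  | .b i, .b k => k = i + 1
  | .c i, .c k => k = i + 1
  | .q _ _, .a _ => True
  | .q _ _, .b _ => True
  | .q _ _, .c _ => True
  | .r i j, .q i' j' => i' = i ∧ j' = j
  | .r i _, .a k => k = i ∨ k = i + 1
  | .r i _, .b k => k = i ∨ k = i + 1
  | .r i _, .c k => k = i ∨ k = i + 1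
  | _, _ => False

/-- The graph `G` from the paper (28 vertices). -/
def GraphG : SimpleGraph GVert := SimpleGraph.fromRel GRel

/-!
The twelve cycle vertices stay visible during all eight time steps, while the pair `q i j`, `r i j`
is visible only at its own step. Every frame is therefore the three 4-cycles together with one apex
and one edge vertex, a planar graph, and one placement of the cycle vertices serves all eight
frames once the apexes are placed far out and a few apex edges are rerouted.

Vertices and bends sit at integer points and every edge is drawn as a two-segment polyline through
its bend. Planarity of a frame then reduces to finitely many sign conditions on integer cross
products, which are checked by evaluation in the kernel.
-/

open Set Function

theorem Path.trans_injective {X : Type*} [TopologicalSpace X] {x y z : X}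
    {γ₁ : Path x y} {γ₂ : Path y z} (h₁ : Injective γ₁) (h₂ : Injective γ₂)
    (h : range γ₁ ∩ range γ₂ ⊆ {y}) : Injective (γ₁.trans γ₂) := by
  have junction : ∀ a b, γ₁ a = γ₂ b → b = 0 := fun a b hab =>
    h₂ ((h ⟨⟨a, hab⟩, b, rfl⟩ : γ₂ b = y).trans γ₂.source.symm)
  intro s t hst
  rw [Path.trans_apply, Path.trans_apply] at hst
  split_ifs at hst with hs ht ht
  · exact Subtype.ext (by simpa using congrArg Subtype.val (h₁ hst))
  · have := congrArg Subtype.val (junction _ _ hst)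
    simp only [Set.Icc.coe_zero] at this
    linarith
  · have := congrArg Subtype.val (junction _ _ hst.symm)
    simp only [Set.Icc.coe_zero] at this
    linarith
  · exact Subtype.ext (by simpa using congrArg Subtype.val (h₂ hst))

section Polyline

variable {E : Type*} [AddCommGroup E] [Module ℝ E] [TopologicalSpace E] [ContinuousAdd E]
  [ContinuousSMul ℝ E]

noncomputable def polyline (P M Q : E) : Path P Q := (Path.segment P M).trans (Path.segment M Q)

theorem range_polyline (P M Q : E) :
    range (polyline P M Q) = segment ℝ P M ∪ segment ℝ Q M := by
  rw [polyline, Path.trans_range, Path.range_segment, Path.range_segment, segment_symm ℝ M Q]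

theorem polyline_symm (P M Q : E) : (polyline P M Q).symm = polyline Q M P := by
  rw [polyline, Path.trans_symm, Path.segment_symm, Path.segment_symm, polyline]

theorem polyline_injective {P M Q : E} (hPM : P ≠ M) (hMQ : M ≠ Q)
    (h : segment ℝ M P ∩ segment ℝ M Q ⊆ {M}) : Injective (polyline P M Q) :=
  Path.trans_injective (Path.segment_injective_of_ne hPM) (Path.segment_injective_of_ne hMQ)
    (by rwa [Path.range_segment, Path.range_segment, segment_symm])

end Polyline

section Cross

variable {R : Type*} [CommRing R]

def cross (P Q X : R × R) : R := (Q.1 - P.1) * (X.2 - P.2) - (Q.2 - P.2) * (X.1 - P.1)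

theorem cross_swap (P Q X : R × R) : cross Q P X = -cross P Q X := by
  unfold cross; ring

theorem cross_self_left (P Q : R × R) : cross P Q P = 0 := by
  unfold cross; ring

theorem cross_self_right (P Q : R × R) : cross P Q Q = 0 := by
  unfold cross; ring

variable [LinearOrder R]

/-- One of the segments `AB`, `CD` lies strictly on one side of the line through the other. -/
def OrientSeparated (A B C D : R × R) : Prop :=
  0 < cross A B C * cross A B D ∨ 0 < cross C D A * cross C D B

def OrientSeparatedOrFan (A B C D : R × R) : Prop :=
  OrientSeparated A B C D ∨ (A = C ∧ cross A B D ≠ 0)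

instance [DecidableEq R] (A B C D : R × R) : Decidable (OrientSeparatedOrFan A B C D) :=
  inferInstanceAs (Decidable ((_ ∨ _) ∨ _))

end Cross

section Real

variable {P Q A B X : ℝ × ℝ}

theorem cross_add_smul (P Q A B : ℝ × ℝ) {a b : ℝ} (hab : a + b = 1) :
    cross P Q (a • A + b • B) = a * cross P Q A + b * cross P Q B := by
  obtain rfl : b = 1 - a := by linarith
  simp only [cross, Prod.fst_add, Prod.snd_add, Prod.smul_fst, Prod.smul_snd, smul_eq_mul]
  ring

theorem cross_eq_zero_of_mem_segment (hX : X ∈ segment ℝ P Q) : cross P Q X = 0 := by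
  obtain ⟨a, b, -, -, hab, rfl⟩ := hX
  rw [cross_add_smul _ _ _ _ hab, cross_self_left, cross_self_right]
  ring

theorem cross_ne_zero_of_mem_segment (h : 0 < cross P Q A * cross P Q B)
    (hX : X ∈ segment ℝ A B) : cross P Q X ≠ 0 := by
  obtain ⟨a, b, ha, hb, hab, rfl⟩ := hX
  rw [cross_add_smul _ _ _ _ hab]
  intro h0
  have hsq : a * cross P Q A ^ 2 + b * (cross P Q A * cross P Q B) = 0 := by
    linear_combination cross P Q A * h0
  have hb0 : b * (cross P Q A * cross P Q B) = 0 := by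
    nlinarith [mul_nonneg ha (sq_nonneg (cross P Q A)), mul_nonneg hb h.le]
  obtain rfl : b = 0 := (mul_eq_zero.1 hb0).resolve_right h.ne'
  obtain rfl : a = 1 := by linarith
  simp only [one_mul, zero_mul, add_zero] at h0
  simp [h0] at h

theorem OrientSeparated.disjoint_segment {A B C D : ℝ × ℝ} (h : OrientSeparated A B C D) :
    Disjoint (segment ℝ A B) (segment ℝ C D) := by
  refine Set.disjoint_left.2 fun X hAB hCD => ?_
  rcases h with h | h
  · exact cross_ne_zero_of_mem_segment h hCD (cross_eq_zero_of_mem_segment hAB)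
  · exact cross_ne_zero_of_mem_segment h hAB (cross_eq_zero_of_mem_segment hCD)

theorem segment_inter_segment_subset_of_cross_ne_zero (h : cross A B X ≠ 0) :
    segment ℝ A B ∩ segment ℝ A X ⊆ {A} := by
  rintro Y ⟨hB, a, t, -, -, hat, rfl⟩
  have hY := cross_eq_zero_of_mem_segment hB
  rw [cross_add_smul _ _ _ _ hat, cross_self_left, mul_zero, zero_add] at hY
  obtain rfl : t = 0 := (mul_eq_zero.1 hY).resolve_right h
  obtain rfl : a = 1 := by linarith
  simp

theorem OrientSeparatedOrFan.eq_of_mem {A B C D : ℝ × ℝ} (h : OrientSeparatedOrFan A B C D)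
    (hX : X ∈ segment ℝ A B ∩ segment ℝ C D) : A = C ∧ X = A := by
  rcases h with h | ⟨rfl, h⟩
  · exact (Set.disjoint_iff.1 h.disjoint_segment hX).elim
  · exact ⟨rfl, segment_inter_segment_subset_of_cross_ne_zero h hX⟩

theorem polyline_injective_of_cross_ne_zero {P M Q : ℝ × ℝ} (h : cross P M Q ≠ 0) :
    Injective (polyline P M Q) := by
  refine polyline_injective (fun hPM => h ?_) (fun hMQ => h ?_) ?_
  · simp [hPM, cross]
  · rw [hMQ, cross_self_right]
  · exact segment_inter_segment_subset_of_cross_ne_zero (by rwa [cross_swap, neg_ne_zero])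

end Real

section PolylineDrawing

def toR2 (P : ℤ × ℤ) : ℝ × ℝ := ((P.1 : ℝ), (P.2 : ℝ))

theorem toR2_injective : Injective toR2 := fun P Q h => by
  simp only [toR2, Prod.mk.injEq, Int.cast_inj] at h
  exact Prod.ext h.1 h.2

theorem cross_toR2 (P Q X : ℤ × ℤ) : cross (toR2 P) (toR2 Q) (toR2 X) = cross P Q X := by
  simp only [cross, toR2]
  push_cast
  ring

theorem OrientSeparatedOrFan.toR2 {A B C D : ℤ × ℤ} (h : OrientSeparatedOrFan A B C D) :
    OrientSeparatedOrFan (toR2 A) (toR2 B) (toR2 C) (toR2 D) := by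
  simp only [OrientSeparatedOrFan, OrientSeparated, cross_toR2, toR2_injective.eq_iff]
  exact_mod_cast h

variable {V : Type*} (G : SimpleGraph V) (Z : V → ℤ × ℤ) (W : V → V → ℤ × ℤ)

noncomputable def polylineDrawing (u v : V) (_ : G.Adj u v) : Path (toR2 (Z u)) (toR2 (Z v)) :=
  polyline (toR2 (Z u)) (toR2 (W u v)) (toR2 (Z v))

/-- The two segments of an edge are oriented from its endpoints towards its bend, so distinct
edges of `E` may meet only in a common starting point of such segments. -/
def IsPlanarPolylineCert (S : List V) (E : List (V × V)) : Prop :=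
  (∀ u ∈ S, ∀ v ∈ S, Z u = Z v → u = v) ∧
  (∀ u ∈ S, ∀ v ∈ S, G.Adj u v → (u, v) ∈ E ∨ (v, u) ∈ E) ∧
  (∀ e ∈ E, ∀ w ∈ S,
    w = e.1 ∨ w = e.2 ∨ ∀ w' ∈ [e.1, e.2], cross (Z w') (W e.1 e.2) (Z w) ≠ 0) ∧
  (∀ e ∈ E, ∀ e' ∈ E, e = e' ∨ ∀ w ∈ [e.1, e.2], ∀ w' ∈ [e'.1, e'.2],
    OrientSeparatedOrFan (Z w) (W e.1 e.2) (Z w') (W e'.1 e'.2))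

instance [DecidableEq V] [DecidableRel G.Adj] (S : List V) (E : List (V × V)) :
    Decidable (IsPlanarPolylineCert G Z W S E) :=
  inferInstanceAs (Decidable (_ ∧ _ ∧ _ ∧ _))

variable {G Z W}

theorem polylineDrawing_symm (hW : ∀ u v, G.Adj u v → W u v = W v u) {u v : V}
    (h : G.Adj u v) : polylineDrawing G Z W v u h.symm = (polylineDrawing G Z W u v h).symm := by
  rw [polylineDrawing, polylineDrawing, polyline_symm, hW u v h]

theorem polylineDrawing_injective {u v : V} (h : G.Adj u v)
    (hbent : cross (Z u) (W u v) (Z v) ≠ 0) : Injective (polylineDrawing G Z W u v h) :=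
  polyline_injective_of_cross_ne_zero (by rwa [cross_toR2, Int.cast_ne_zero])

theorem mem_range_polylineDrawing {u v : V} (h : G.Adj u v) {p : ℝ × ℝ} :
    p ∈ range (polylineDrawing G Z W u v h) ↔
      ∃ w ∈ [u, v], p ∈ segment ℝ (toR2 (Z w)) (toR2 (W u v)) := by
  simp [polylineDrawing, range_polyline]

theorem exists_mem_edgeList_of_adj {E : List (V × V)} (hW : ∀ u v, G.Adj u v → W u v = W v u)
    {u v : V} (huv : G.Adj u v) (hE : (u, v) ∈ E ∨ (v, u) ∈ E) :
    ∃ e ∈ E, (e = (u, v) ∨ e = (v, u)) ∧ ∀ p, p ∈ range (polylineDrawing G Z W u v huv) ↔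
      ∃ w ∈ [e.1, e.2], p ∈ segment ℝ (toR2 (Z w)) (toR2 (W e.1 e.2)) := by
  rcases hE with he | he
  · exact ⟨_, he, Or.inl rfl, fun p => mem_range_polylineDrawing huv⟩
  · refine ⟨_, he, Or.inr rfl, fun p => ?_⟩
    rw [mem_range_polylineDrawing huv, ← hW u v huv]
    simp only [List.mem_pair, exists_eq_or_imp, exists_eq_left]
    exact or_comm

theorem isPlanarTopoFrame_polylineDrawing (hW : ∀ u v, G.Adj u v → W u v = W v u)
    {S : List V} {E : List (V × V)} (h : IsPlanarPolylineCert G Z W S E) :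
    IsPlanarTopoFrame G {v | v ∈ S} (fun v => toR2 (Z v)) (polylineDrawing G Z W) := by
  obtain ⟨hinj, hcover, havoid, hmeet⟩ := h
  refine ⟨fun u hu v hv huv => hinj u hu v hv (toR2_injective huv), ?_, ?_⟩
  · intro u v huv w hu hv hw hmem
    obtain ⟨e, he, hends, hrange⟩ := exists_mem_edgeList_of_adj hW huv (hcover u hu v hv huv)
    obtain ⟨w', hw', hseg⟩ := (hrange _).1 hmem
    rcases havoid e he w hw with hwe | hwe | hcross
    · rcases hends with rfl | rfl <;> simp [hwe]
    · rcases hends with rfl | rfl <;> simp [hwe]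
    · have := cross_eq_zero_of_mem_segment hseg
      rw [cross_toR2, Int.cast_eq_zero] at this
      exact absurd this (hcross w' hw')
  · rintro u v x y huv hxy hu hv hx hy hne p ⟨hp₁, hp₂⟩
    obtain ⟨e, he, hends, hrange⟩ := exists_mem_edgeList_of_adj hW huv (hcover u hu v hv huv)
    obtain ⟨e', he', hends', hrange'⟩ := exists_mem_edgeList_of_adj hW hxy (hcover x hx y hy hxy)
    obtain ⟨w, hw, hpw⟩ := (hrange p).1 hp₁
    obtain ⟨w', hw', hpw'⟩ := (hrange' p).1 hp₂
    have hwuv : w = u ∨ w = v := by rcases hends with rfl | rfl <;> simpa [or_comm] using hw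
    have hwxy : w' = x ∨ w' = y := by rcases hends' with rfl | rfl <;> simpa [or_comm] using hw'
    rcases hmeet e he e' he' with rfl | hsep
    · rcases hends with rfl | rfl <;> rcases hends' with h' | h' <;>
        simp only [Prod.mk.injEq] at h' <;> simp [h'] at hne
    obtain ⟨heq, rfl⟩ := (hsep w hw w' hw').toR2.eq_of_mem ⟨hpw, hpw'⟩
    have hwS : w ∈ S := by rcases hwuv with rfl | rfl <;> assumption
    have hw'S : w' ∈ S := by rcases hwxy with rfl | rfl <;> assumption
    obtain rfl := hinj w hwS w' hw'S (toR2_injective heq)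
    exact ⟨w, hwuv, hwxy, rfl⟩

end PolylineDrawing

namespace GVert

def all : List GVert :=
  (List.finRange 4).map a ++ (List.finRange 4).map b ++ (List.finRange 4).map c ++
    (List.finRange 4).flatMap (fun i => (List.finRange 2).map (q i)) ++
    (List.finRange 4).flatMap (fun i => (List.finRange 2).map (r i))

theorem mem_all (v : GVert) : v ∈ all := by
  cases v <;> simp [all]

instance : Fintype GVert := Fintype.ofList all mem_all

end GVert

instance : DecidableRel GRel := fun u v => by
  cases u <;> cases v <;> dsimp only [GRel] <;> infer_instance

instance : DecidableRel GraphG.Adj :=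
  inferInstanceAs (DecidableRel (SimpleGraph.fromRel GRel).Adj)

theorem GRel.asymm : ∀ u v, GRel u v → ¬GRel v u := by decide

/-- The cycles `A`, `B`, `C` are translated copies of one small quadrilateral along the diagonal;
the apex and edge vertices lie far out. Positions depend on `i` only: `q i 0` and `q i 1` are
never visible together. -/
def vertexPos : GVert → ℤ × ℤ
  | .a i => cyclePos i
  | .b i => cyclePos i + (600000, 600000)
  | .c i => cyclePos i + (1200000, 1200000)
  | .q i _ => ![(14000000, 7600000), (2400000, 10000000), (-8000000, -2000000),
      (-9000000, -16000000)] i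
  | .r i _ => ![(-8000000, 1200000), (1800000, -8000000), (8000000, -1000000),
      (-1000000, 10000000)] i
where
  cyclePos : Fin 4 → ℤ × ℤ := ![(-40000, 20000), (-80000, -60000), (100000, -80000), (60000, 60000)]

/-- The midpoint of `PQ` pushed sideways by `|PQ| / 10000`: the edge stays close to the straight
segment, but its bend is off the line `PQ`. -/
def offsetMidpoint (P Q : ℤ × ℤ) : ℤ × ℤ :=
  ((P.1 + Q.1) / 2 + (Q.2 - P.2) / 10000, (P.2 + Q.2) / 2 + (P.1 - Q.1) / 10000)

/-- Bends of the edges oriented as in `GRel`; the edges from `q₁` to `a₂, b₂, c₂` and from `q₄` to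
`a₄, b₄, c₄` (indices `0`-based in Lean) are routed around the cycles by hand. -/
def bendPos : GVert → GVert → ℤ × ℤ
  | .q 0 _, .a 1 => (200000, -600000)
  | .q 0 _, .b 1 => (480000, 360000)
  | .q 0 _, .c 1 => (960000, 880000)
  | .q 3 _, .a 3 => (280000, 200000)
  | .q 3 _, .b 3 => (900000, 820000)
  | .q 3 _, .c 3 => (1480000, 1320000)
  | u, v => offsetMidpoint (vertexPos u) (vertexPos v)

def edgeBend (u v : GVert) : ℤ × ℤ := if GRel u v then bendPos u v else bendPos v u

theorem edgeBend_comm {u v : GVert} (h : GraphG.Adj u v) : edgeBend u v = edgeBend v u := by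
  rcases ((SimpleGraph.fromRel_adj _ _ _).1 h).2 with h | h <;>
    simp [edgeBend, h, GRel.asymm _ _ h]

theorem cross_edgeBend_ne_zero :
    ∀ u v, GraphG.Adj u v → cross (vertexPos u) (edgeBend u v) (vertexPos v) ≠ 0 := by
  decide +kernel

def firstStep : GVert → ℕ
  | .q i j | .r i j => 1 + i + 4 * j
  | _ => 1

def lastStep : GVert → ℕ
  | .q i j | .r i j => 1 + i + 4 * j
  | _ => 8

theorem firstStep_bounds (v : GVert) :
    1 ≤ firstStep v ∧ firstStep v ≤ lastStep v ∧ lastStep v ≤ 8 := by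
  revert v
  decide

theorem firstStep_le_lastStep_of_adj : ∀ u v, GraphG.Adj u v → firstStep u ≤ lastStep v := by
  decide

def frameVerts (t : ℕ) : List GVert :=
  GVert.all.filter fun v => firstStep v ≤ t ∧ t ≤ lastStep v

def frameEdges (t : ℕ) : List (GVert × GVert) :=
  (frameVerts t).flatMap fun u => ((frameVerts t).filter (GRel u)).map (u, ·)

theorem mem_frameVerts {t : ℕ} {v : GVert} :
    v ∈ frameVerts t ↔ firstStep v ≤ t ∧ t ≤ lastStep v := by
  simp [frameVerts, GVert.mem_all]

theorem isPlanarPolylineCert_frame : ∀ t ∈ Finset.Icc 1 8,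
    IsPlanarPolylineCert GraphG vertexPos edgeBend (frameVerts t) (frameEdges t) := by
  decide +kernel

theorem graphG_has_planar_storyplan : HasPlanarStoryplan GraphG := by
  have hW : ∀ u v, GraphG.Adj u v → edgeBend u v = edgeBend v u := fun _ _ => edgeBend_comm
  refine ⟨8, firstStep, lastStep, fun v => toR2 (vertexPos v),
    polylineDrawing GraphG vertexPos edgeBend, by norm_num, firstStep_bounds,
    fun u v h => polylineDrawing_symm hW h,
    fun u v h => polylineDrawing_injective h (cross_edgeBend_ne_zero u v h),
    fun u v h => ?_, fun t ht₁ ht₈ => ?_⟩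
  · exact ⟨max (firstStep u) (firstStep v), le_max_left _ _,
      max_le (firstStep_bounds u).2.1 (firstStep_le_lastStep_of_adj v u h.symm),
      le_max_right _ _, max_le (firstStep_le_lastStep_of_adj u v h) (firstStep_bounds v).2.1⟩
  · simp_rw [← mem_frameVerts]
    exact isPlanarTopoFrame_polylineDrawing hW
      (isPlanarPolylineCert_frame t (Finset.mem_Icc.2 ⟨ht₁, ht₈⟩))
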